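/- arXiv:1707.00232 — 3 statements merged into one kernel-verified Lean document; each statement's English description precedes it below -/
import Mathlib

section
/- For any group G and elements x, y in G, the third power of the product satisfies (xy)³ = x³y³(s₂t₃²t₄)²s₃u₄²u₅s₂t₃, where s₂ = [y,x], s₃ = [s₂,x], t₃ = [s₂,y], t₄ = [t₃,y], u₄ = [s₃,y], u₅ = [u₄,y]. -/
private def Xg : FreeGroup Bool := FreeGroup.of true
private def Yg : FreeGroup Bool := FreeGroup.of false

private lemma free_identity :
    let x := Xg; let y := Yg
    let s₂ := y⁻¹ * x⁻¹ * y * x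
    let s₃ := s₂⁻¹ * x⁻¹ * s₂ * x
    let t₃ := s₂⁻¹ * y⁻¹ * s₂ * y
    let t₄ := t₃⁻¹ * y⁻¹ * t₃ * y
    let u₄ := s₃⁻¹ * y⁻¹ * s₃ * y
    let u₅ := u₄⁻¹ * y⁻¹ * u₄ * y
    (x * y) ^ 3 = x ^ 3 * y ^ 3 * (s₂ * t₃ ^ 2 * t₄) ^ 2 * s₃ * u₄ ^ 2 * u₅ * s₂ * t₃ := by
  decide

/-- `(xy)³ = x³y³(s₂t₃²t₄)²s₃u₄²u₅s₂t₃` with `s₂=[y,x]`, `s₃=[s₂,x]`, `t₃=[s₂,y]`,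
`t₄=[t₃,y]`, `u₄=[s₃,y]`, `u₅=[u₄,y]`, where `[a,b] = a⁻¹b⁻¹ab`. -/
theorem cube_of_mul (G : Type*) [Group G] (x y s₂ s₃ t₃ t₄ u₄ u₅ : G)
    (hs₂ : s₂ = y⁻¹ * x⁻¹ * y * x)
    (hs₃ : s₃ = s₂⁻¹ * x⁻¹ * s₂ * x)
    (ht₃ : t₃ = s₂⁻¹ * y⁻¹ * s₂ * y)
    (ht₄ : t₄ = t₃⁻¹ * y⁻¹ * t₃ * y)
    (hu₄ : u₄ = s₃⁻¹ * y⁻¹ * s₃ * y)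
    (hu₅ : u₅ = u₄⁻¹ * y⁻¹ * u₄ * y) :
    (x * y) ^ 3 = x ^ 3 * y ^ 3 * (s₂ * t₃ ^ 2 * t₄) ^ 2 * s₃ * u₄ ^ 2 * u₅ * s₂ * t₃ := by
  subst hs₂ hs₃ ht₃ ht₄ hu₄ hu₅
  have h := congrArg (FreeGroup.lift (fun b : Bool => if b then x else y)) free_identity
  simpa [Xg, Yg] using h
end

section
/- Let G ≅ G₁ⁿ(z,w) (a = 1 in the Blackburn presentation, n ≥ 5). Then with s₂=[y,x], t₃=[s₂,y]=s_{n−1}^{−1} central of order dividing 3, one has (xy)³ = x³y³s₂³s₃s_{n−1}^{−2} and (xy²)³ = x³y⁶s₂⁶s₃²s_{n−1}^{−2}. -/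
private lemma tail2 {G : Type*} [Group G] (a b c d : G) (h : a * b = c * d) :
    ∀ g : G, a * (b * g) = c * (d * g) := by
  intro g
  rw [← mul_assoc, h]
  group

private lemma tail3 {G : Type*} [Group G] (a b c d e : G) (h : a * b = c * (d * e)) :
    ∀ g : G, a * (b * g) = c * (d * (e * g)) := by
  intro g
  rw [← mul_assoc, h]
  group

private lemma comm_inv {G : Type*} [Group G] (a b : G) (h : a * b = b * a) :
    a * b⁻¹ = b⁻¹ * a := by
  calc a * b⁻¹ = b⁻¹ * (b * a) * b⁻¹ := by group
    _ = b⁻¹ * (a * b) * b⁻¹ := by rw [h]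
    _ = b⁻¹ * a := by group

private lemma comm_mul {G : Type*} [Group G] (a b c : G) (h1 : a * b = b * a)
    (h2 : a * c = c * a) : a * (b * c) = b * c * a := by
  calc a * (b * c) = (a * b) * c := by group
    _ = (b * a) * c := by rw [h1]
    _ = b * (a * c) := by group
    _ = b * (c * a) := by rw [h2]
    _ = b * c * a := by group

/-- Let `G ≅ G₁ⁿ(z,w)` (parameter `a = 1` in the Blackburn presentation, `n ≥ 5`),
i.e. `G` is generated by `x, y` with `s₂ = [y,x]`, `s_i = [s_{i-1},x]` (`3 ≤ i ≤ n`),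
`s_n = 1`, `[y,s₂] = s_{n-1}`, `[y,s_i] = 1` (`3 ≤ i ≤ n-1`), `x³ = s_{n-1}^w`,
`y³s₂³s₃ = s_{n-1}^z`, `s_i³s_{i+1}³s_{i+2} = 1` (`2 ≤ i ≤ n-3`),
`s_{n-2}³ = s_{n-1}³ = 1`, with `s_{n-1}` central and `[a,b] = a⁻¹b⁻¹ab`.
Then `t₃ = [s₂,y] = s_{n-1}⁻¹` is central of order dividing `3`, and
`(xy)³ = x³y³s₂³s₃s_{n-1}⁻²` and `(xy²)³ = x³y⁶s₂⁶s₃²s_{n-1}⁻²`. -/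
theorem cube_formulas_a_eq_one (G : Type*) [Group G] [Finite G] (n : ℕ) (hn : 5 ≤ n)
    (hcard : Nat.card G = 3 ^ n) (w z : ℤ) (x y : G) (s : ℕ → G)
    (hgen : Subgroup.closure {x, y} = (⊤ : Subgroup G))
    (hs2 : s 2 = y⁻¹ * x⁻¹ * y * x)
    (hsi : ∀ i, 3 ≤ i → i ≤ n → s i = (s (i - 1))⁻¹ * x⁻¹ * s (i - 1) * x)
    (hsn : s n = 1)
    (hys2 : y⁻¹ * (s 2)⁻¹ * y * s 2 = s (n - 1))
    (hys : ∀ i, 3 ≤ i → i ≤ n - 1 → y⁻¹ * (s i)⁻¹ * y * s i = 1)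
    (hcent : ∀ g : G, g * s (n - 1) = s (n - 1) * g)
    (hx3 : x ^ 3 = s (n - 1) ^ w)
    (hy3 : y ^ 3 * s 2 ^ 3 * s 3 = s (n - 1) ^ z)
    (hchain : ∀ i, 2 ≤ i → i ≤ n - 3 → s i ^ 3 * s (i + 1) ^ 3 * s (i + 2) = 1)
    (hn2 : s (n - 2) ^ 3 = 1) (hn1 : s (n - 1) ^ 3 = 1) :
    (s 2)⁻¹ * y⁻¹ * s 2 * y = (s (n - 1))⁻¹ ∧
      ((s (n - 1))⁻¹) ^ 3 = 1 ∧
      (x * y) ^ 3 = x ^ 3 * y ^ 3 * s 2 ^ 3 * s 3 * s (n - 1) ^ (-2 : ℤ) ∧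
      (x * y ^ 2) ^ 3 = x ^ 3 * y ^ 6 * s 2 ^ 6 * s 3 ^ 2 * s (n - 1) ^ (-2 : ℤ) := by
  set t := s (n - 1) with htdef
  -- basic exchange relations
  have r1e : y * x = x * (y * s 2) := by rw [hs2]; group
  have h3 : s 3 = (s 2)⁻¹ * x⁻¹ * s 2 * x := by
    have h := hsi 3 (by norm_num) (by omega)
    norm_num at h
    exact h
  have r2e : s 2 * x = x * (s 2 * s 3) := by rw [h3]; group
  have hys3 : y * s 3 = s 3 * y := by
    have h := hys 3 (by norm_num) (by omega)
    calc y * s 3 = (s 3 * y) * (y⁻¹ * (s 3)⁻¹ * y * s 3) := by group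
      _ = s 3 * y := by rw [h, mul_one]
  have r4e : s 3 * y = y * s 3 := hys3.symm
  have hy2 : y * s 2 = s 2 * (y * t) := by
    calc y * s 2 = (s 2 * y) * (y⁻¹ * (s 2)⁻¹ * y * s 2) := by group
      _ = (s 2 * y) * t := by rw [hys2]
      _ = s 2 * (y * t) := by group
  have r3e : s 2 * y = y * (s 2 * t⁻¹) := by
    calc s 2 * y = s 2 * (y * t) * t⁻¹ := by group
      _ = (y * s 2) * t⁻¹ := by rw [← hy2]
      _ = y * (s 2 * t⁻¹) := by group
  have hc : ∀ a : G, t⁻¹ * a = a * t⁻¹ := by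
    intro a
    calc t⁻¹ * a = t⁻¹ * (a * t) * t⁻¹ := by group
      _ = t⁻¹ * (t * a) * t⁻¹ := by rw [hcent a]
      _ = a * t⁻¹ := by group
  -- key downward induction: x * s i * x⁻¹ commutes with y
  have hxconj : ∀ k i, 3 ≤ i → i + k = n → y * (x * s i * x⁻¹) = (x * s i * x⁻¹) * y := by
    intro k
    induction k with
    | zero =>
      intro i h3i hik
      have hi : i = n := by omega
      subst hi
      rw [hsn]
      group
    | succ k ih =>
      intro i h3i hik
      have hy_si : y * s i = s i * y := by
        have h := hys i h3i (by omega)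
        calc y * s i = (s i * y) * (y⁻¹ * (s i)⁻¹ * y * s i) := by group
          _ = s i * y := by rw [h, mul_one]
      have hrec : s (i + 1) = (s i)⁻¹ * x⁻¹ * s i * x := by
        have h := hsi (i + 1) (by omega) (by omega)
        simpa using h
      have hsplit : x * s i * x⁻¹ = s i * (x * s (i + 1) * x⁻¹)⁻¹ := by
        rw [hrec]; group
      have hih := ih (i + 1) (by omega) (by omega)
      rw [hsplit]
      exact comm_mul y (s i) (x * s (i + 1) * x⁻¹)⁻¹ hy_si (comm_inv y _ hih)
  have hk3 : y * (x * s 3 * x⁻¹) = (x * s 3 * x⁻¹) * y := hxconj (n - 3) 3 le_rfl (by omega)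
  have r5e : s 3 * s 2 = s 2 * s 3 := by
    have h : s 2 * s 3 = s 3 * s 2 := by
      calc s 2 * s 3 = y⁻¹ * x⁻¹ * (y * (x * s 3 * x⁻¹)) * x := by rw [hs2]; group
        _ = y⁻¹ * x⁻¹ * ((x * s 3 * x⁻¹) * y) * x := by rw [hk3]
        _ = (y⁻¹ * s 3) * (x⁻¹ * y * x) := by group
        _ = (s 3 * y⁻¹) * (x⁻¹ * y * x) := by rw [← comm_inv (s 3) y hys3.symm]
        _ = s 3 * s 2 := by rw [hs2]; group
    exact h.symm
  -- tailed rewrite rules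
  have r1 := tail3 y x x y (s 2) r1e
  have r2 := tail3 (s 2) x x (s 2) (s 3) r2e
  have r3 := tail3 (s 2) y y (s 2) t⁻¹ r3e
  have r4 := tail2 (s 3) y y (s 3) r4e
  have r5 := tail2 (s 3) (s 2) (s 2) (s 3) r5e
  have tmxe := hc x
  have tmye := hc y
  have tm2e := hc (s 2)
  have tm3e := hc (s 3)
  have tmx := tail2 t⁻¹ x x t⁻¹ (hc x)
  have tmy := tail2 t⁻¹ y y t⁻¹ (hc y)
  have tm2 := tail2 t⁻¹ (s 2) (s 2) t⁻¹ (hc (s 2))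
  have tm3 := tail2 t⁻¹ (s 3) (s 3) t⁻¹ (hc (s 3))
  have tc3e : t⁻¹ * (t⁻¹ * t⁻¹) = 1 := by
    have h : t⁻¹ * (t⁻¹ * t⁻¹) = (t ^ 3)⁻¹ := by group
    rw [h, hn1, inv_one]
  have tc3 : ∀ g : G, t⁻¹ * (t⁻¹ * (t⁻¹ * g)) = g := by
    intro g
    calc t⁻¹ * (t⁻¹ * (t⁻¹ * g)) = (t⁻¹ * (t⁻¹ * t⁻¹)) * g := by group
      _ = g := by rw [tc3e, one_mul]
  refine ⟨?_, ?_, ?_, ?_⟩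
  · calc (s 2)⁻¹ * y⁻¹ * s 2 * y = (y⁻¹ * (s 2)⁻¹ * y * s 2)⁻¹ := by group
      _ = t⁻¹ := by rw [hys2]
  · calc (t⁻¹) ^ 3 = (t ^ 3)⁻¹ := by group
      _ = 1 := by rw [hn1, inv_one]
  · have p3 : ∀ a : G, a ^ 3 = a * (a * a) := fun a => by simp [pow_succ, mul_assoc]
    have pz : t ^ (-2 : ℤ) = t⁻¹ * t⁻¹ := by group
    rw [p3 (x * y), p3 x, p3 y, p3 (s 2), pz]
    simp only [mul_assoc]
    simp only [r1, r1e, r2, r2e, r3, r3e, r4, r4e, r5, r5e, tmx, tmxe, tmy, tmye, tm2, tm2e,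
      tm3, tm3e, tc3, tc3e, one_mul, mul_one]
  · have p3 : ∀ a : G, a ^ 3 = a * (a * a) := fun a => by simp [pow_succ, mul_assoc]
    have p2 : ∀ a : G, a ^ 2 = a * a := fun a => by simp [pow_succ, mul_assoc]
    have p6 : ∀ a : G, a ^ 6 = a * (a * (a * (a * (a * a)))) := fun a => by simp [pow_succ, mul_assoc]
    have pz : t ^ (-2 : ℤ) = t⁻¹ * t⁻¹ := by group
    rw [p3 (x * y ^ 2), p3 x, p6 y, p6 (s 2), p2 (s 3), p2 y, pz]
    simp only [mul_assoc]
    simp only [r1, r1e, r2, r2e, r3, r3e, r4, r4e, r5, r5e, tmx, tmxe, tmy, tmye, tm2, tm2e,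
      tm3, tm3e, tc3, tc3e, one_mul, mul_one]
end

section
/- Let G be a finite p-group of maximal class (coclass 1) and order pⁿ with n ≥ 4. Then the two-step centralizer χ₂(G) = {g ∈ G : [g,h] ∈ γ₄(G) for all h ∈ γ₂(G)} is a maximal subgroup of G. -/
/-!
In a `p`-group of class `c` every factor `γᵢ/γᵢ₊₁` with `i ≤ c` is nontrivial, and `G/γ₂` is not
cyclic (otherwise `G/γ₃` would be abelian), so `|G : γ₂| ≥ p²`. When `|G| = p^(c+1)` all these
bounds are equalities: `|γ₂/γ₃| = |γ₃/γ₄| = p`. Modulo `γ₄`, `γ₃` is then central and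
`γ₂ = ⟨t⟩γ₃` for any `t ∈ γ₂ \ γ₃`, so `χ₂(G)` is the preimage of the centralizer of the single
element `t`. As `g ↦ [g, t]` is a homomorphism `G/γ₄ → γ₃/γ₄`, the index of `χ₂(G)` divides `p`,
and it is not `1` because `γ₃ ≠ γ₄`.
-/

open scoped commutatorElement

namespace QuotientGroup

open Subgroup

variable {G : Type*} [Group G] (N : Subgroup G) [N.Normal]

theorem commute_mk_iff_commutatorElement_mem (g h : G) :
    Commute (g : G ⧸ N) (h : G ⧸ N) ↔ ⁅g, h⁆ ∈ N := by
  rw [← commutatorElement_eq_one_iff_commute, ← eq_one_iff]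
  rfl

theorem map_mk'_le_center_iff (H : Subgroup G) :
    H.map (mk' N) ≤ center (G ⧸ N) ↔ ⁅H, ⊤⁆ ≤ N := by
  rw [← commutator_top_right_eq_bot_iff_le_center, ← map_top_of_surjective _ (mk'_surjective N),
    ← map_commutator, Subgroup.map_eq_bot_iff, ker_mk']

end QuotientGroup

theorem IsPGroup.dvd_relIndex_of_not_le {p : ℕ} [Fact p.Prime] {G : Type*} [Group G] [Finite G]
    (hG : IsPGroup p G) {H K : Subgroup G} (hHK : ¬H ≤ K) : p ∣ K.relIndex H := by
  obtain ⟨e, he⟩ := (hG.to_subgroup H).index (K.subgroupOf H)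
  rw [Subgroup.relIndex, he]
  refine dvd_pow_self p fun he0 => hHK (Subgroup.relIndex_eq_one.mp ?_)
  rw [Subgroup.relIndex, he, he0, pow_zero]

namespace Subgroup

variable {G : Type*} [Group G]

theorem isCoatom_of_index_prime {H : Subgroup G} (hH : H.index.Prime) : IsCoatom H := by
  refine ⟨fun h => by rw [h, index_top] at hH; exact Nat.not_prime_one hH, fun K hHK => ?_⟩
  rw [← relIndex_mul_index hHK.le] at hH
  rcases Nat.prime_mul_iff.mp hH with ⟨-, hK⟩ | ⟨-, hHK'⟩
  · exact index_eq_one.mp hK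
  · exact absurd (relIndex_eq_one.mp hHK') hHK.not_ge

theorem le_zpowers_sup_of_relIndex_prime {H K : Subgroup G} {t : G} (hKH : K ≤ H)
    (hprime : (K.relIndex H).Prime) (ht : t ∈ H) (htK : t ∉ K) : H ≤ zpowers t ⊔ K := by
  set J := (zpowers t ⊔ K) ⊓ H
  have hKJ : K ≤ J := le_inf le_sup_right hKH
  have htJ : t ∈ J := ⟨mem_sup_left (mem_zpowers t), ht⟩
  rw [← relIndex_mul_relIndex K J H hKJ inf_le_right] at hprime
  rcases Nat.prime_mul_iff.mp hprime with ⟨-, hJ⟩ | ⟨-, hKJ'⟩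
  · exact (relIndex_eq_one.mp hJ).trans inf_le_left
  · exact absurd (relIndex_eq_one.mp hKJ' htJ) htK

theorem centralizer_eq_centralizer_singleton {A Z : Subgroup G} {x : G} (hx : x ∈ A)
    (hA : A ≤ zpowers x ⊔ Z) (hZ : Z ≤ center G) :
    centralizer (A : Set G) = centralizer {x} := by
  refine le_antisymm (centralizer_le (Set.singleton_subset_iff.mpr hx)) ?_
  rw [le_centralizer_iff]
  refine hA.trans (sup_le ?_ (hZ.trans (center_le_centralizer _)))
  rw [zpowers_le, mem_centralizer_iff]
  exact fun g hg => mem_centralizer_singleton_iff.mp hg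

theorem index_centralizer_singleton_dvd_card {Z : Subgroup G} {x : G} (hZ : Z ≤ center G)
    (hx : ∀ g : G, ⁅g, x⁆ ∈ Z) : (centralizer {x}).index ∣ Nat.card Z := by
  let φ : G →* Z := MonoidHom.mk' (fun g => ⟨⁅g, x⁆, hx g⟩) fun a b => by
    ext
    have hb := mem_center_iff.mp (hZ (hx b))
    calc ⁅a * b, x⁆ = a * ⁅b, x⁆ * (x * a⁻¹ * x⁻¹) := by simp only [commutatorElement_def]; group
      _ = ⁅b, x⁆ * ⁅a, x⁆ := by rw [hb a]; simp only [commutatorElement_def]; group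
      _ = ⁅a, x⁆ * ⁅b, x⁆ := (hb _).symm
  have hker : φ.ker = centralizer {x} := by
    ext g
    simp [φ, mem_centralizer_singleton_iff, commutatorElement_eq_one_iff_mul_comm]
  rw [← hker, index_ker]
  exact card_dvd_of_le le_top |>.trans (by simp)

local notation "γ" => Subgroup.lowerCentralSeries (⊤ : Subgroup G)

theorem lowerCentralSeries_one_le_two_of_isCyclic [IsCyclic (G ⧸ γ 1)] : γ 1 ≤ γ 2 := by
  have hγ : γ 2 ≤ (γ 1).comap (MonoidHom.id G) := lowerCentralSeries_antitone ⊤ one_le_two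
  have hker : (QuotientGroup.map _ _ _ hγ).ker ≤ center (G ⧸ γ 2) := by
    rw [QuotientGroup.ker_map, comap_id, QuotientGroup.map_mk'_le_center_iff]
    rfl
  have := MonoidHom.isMulCommutative_of_isCyclic_of_ker_le_center _ hker
  change ⁅⊤, ⊤⁆ ≤ γ 2
  rw [← QuotientGroup.map_mk'_le_center_iff, center_eq_top]
  exact le_top

section Nilpotent

variable [Group.IsNilpotent G]

theorem lowerCentralSeries_succ_lt {k : ℕ} (hk : k < Group.nilpotencyClass G) :
    γ (k + 1) < γ k := by
  refine (lowerCentralSeries_antitone ⊤ k.le_succ).lt_of_ne fun heq => hk.not_ge ?_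
  have hconst : ∀ m ≥ k, γ m = γ k := fun m hm => by
    induction m, hm using Nat.le_induction with
    | base => rfl
    | succ m _ ih => rw [lowerCentralSeries_succ, ih, ← lowerCentralSeries_succ, heq]
  rw [← lowerCentralSeries_eq_bot_iff_nilpotencyClass_le, ← hconst _ hk.le,
    lowerCentralSeries_nilpotencyClass]

variable [Finite G] {p : ℕ} [Fact p.Prime]

theorem sq_dvd_index_lowerCentralSeries_one (hG : IsPGroup p G)
    (h2 : 2 ≤ Group.nilpotencyClass G) : p ^ 2 ∣ (γ 1).index := by
  obtain ⟨e, he⟩ := hG.index (γ 1)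
  rw [he]
  refine pow_dvd_pow p (not_lt.mp fun he2 => ?_)
  interval_cases e
  · exact (lowerCentralSeries_succ_lt (G := G) (k := 0) (by omega)).ne (index_eq_one.mp he)
  · have : IsCyclic (G ⧸ γ 1) := isCyclic_of_prime_card (by rw [← index_eq_card, he, pow_one])
    exact (lowerCentralSeries_succ_lt h2).not_ge lowerCentralSeries_one_le_two_of_isCyclic

theorem index_lowerCentralSeries_mul_pow_dvd (hG : IsPGroup p G) {k m : ℕ} (hkm : k ≤ m)
    (hm : m ≤ Group.nilpotencyClass G) : (γ k).index * p ^ (m - k) ∣ (γ m).index := by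
  induction m, hkm using Nat.le_induction with
  | base => simp
  | succ m hkm ih =>
    have hstep : p ∣ (γ (m + 1)).relIndex (γ m) :=
      hG.dvd_relIndex_of_not_le (lowerCentralSeries_succ_lt (by omega)).not_ge
    rw [← relIndex_mul_index (lowerCentralSeries_antitone ⊤ m.le_succ), Nat.sub_add_comm hkm,
      pow_succ, ← mul_assoc, mul_comm]
    exact mul_dvd_mul hstep (ih (by omega))

theorem index_lowerCentralSeries_of_card_eq
    (hcard : Nat.card G = p ^ (Group.nilpotencyClass G + 1))
    {k : ℕ} (hk1 : 1 ≤ k) (hk : k ≤ Group.nilpotencyClass G) (h2 : 2 ≤ Group.nilpotencyClass G) :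
    (γ k).index = p ^ (k + 1) := by
  have hG : IsPGroup p G := IsPGroup.of_card hcard
  apply Nat.dvd_antisymm
  · have := index_lowerCentralSeries_mul_pow_dvd hG hk le_rfl
    rw [lowerCentralSeries_nilpotencyClass, index_bot, hcard,
      show Group.nilpotencyClass G + 1 = k + 1 + (Group.nilpotencyClass G - k) by omega,
      pow_add] at this
    exact Nat.dvd_of_mul_dvd_mul_right (pow_pos (Fact.out : p.Prime).pos _) this
  · calc p ^ (k + 1) = p ^ 2 * p ^ (k - 1) := by rw [← pow_add]; congr 1; omega
      _ ∣ (γ 1).index * p ^ (k - 1) :=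
        mul_dvd_mul_right (sq_dvd_index_lowerCentralSeries_one hG h2) _
      _ ∣ (γ k).index := index_lowerCentralSeries_mul_pow_dvd hG hk1 hk

theorem relIndex_lowerCentralSeries_of_card_eq
    (hcard : Nat.card G = p ^ (Group.nilpotencyClass G + 1))
    {k : ℕ} (hk1 : 1 ≤ k) (hk : k < Group.nilpotencyClass G) :
    (γ (k + 1)).relIndex (γ k) = p := by
  have hmul := relIndex_mul_index (lowerCentralSeries_antitone (⊤ : Subgroup G) k.le_succ)
  rw [index_lowerCentralSeries_of_card_eq hcard hk1 hk.le (by omega),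
    index_lowerCentralSeries_of_card_eq hcard (by omega) hk (by omega), pow_succ p (k + 1),
    mul_comm] at hmul
  exact Nat.eq_of_mul_eq_mul_left (pow_pos (Fact.out : p.Prime).pos _) hmul

end Nilpotent

open QuotientGroup

variable (G) in
/-- The two-step centralizer `χ₂(G)`; in this indexing `γ k` is the paper's `γ_{k+1}`. -/
def twoStepCentralizer : Subgroup G :=
  (centralizer ((γ 1).map (mk' (γ 3)) : Set (G ⧸ γ 3))).comap (mk' (γ 3))

theorem mem_twoStepCentralizer {g : G} :
    g ∈ twoStepCentralizer G ↔ ∀ h ∈ γ 1, g⁻¹ * h⁻¹ * g * h ∈ γ 3 := by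
  simp only [twoStepCentralizer, mem_comap, mem_centralizer_iff, coe_map, Set.forall_mem_image,
    mk'_apply]
  refine forall₂_congr fun h _ => ?_
  rw [show g⁻¹ * h⁻¹ * g * h = ⁅g⁻¹, h⁻¹⁆ by simp [commutatorElement_def],
    ← commute_mk_iff_commutatorElement_mem, mk_inv, mk_inv, Commute.inv_inv_iff]
  exact eq_comm

theorem twoStepCentralizer_eq_top_iff : twoStepCentralizer G = ⊤ ↔ γ 2 ≤ γ 3 := by
  rw [← index_eq_one, twoStepCentralizer, index_comap_of_surjective _ (mk'_surjective _),
    index_eq_one, centralizer_eq_top_iff_subset, SetLike.coe_subset_coe, map_mk'_le_center_iff]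
  rfl

theorem index_twoStepCentralizer_dvd (h : ((γ 2).relIndex (γ 1)).Prime) :
    (twoStepCentralizer G).index ∣ (γ 3).relIndex (γ 2) := by
  have hle : γ 2 ≤ γ 1 := lowerCentralSeries_antitone ⊤ one_le_two
  obtain ⟨t, ht1, ht2⟩ := SetLike.not_le_iff_exists.mp fun h1 => h.ne_one (relIndex_eq_one.mpr h1)
  set π := mk' (γ 3)
  have hcentral : (γ 2).map π ≤ center (G ⧸ γ 3) := (map_mk'_le_center_iff _ _).mpr le_rfl
  have hcyclic : (γ 1).map π ≤ zpowers (π t) ⊔ (γ 2).map π := by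
    rw [← MonoidHom.map_zpowers, ← map_sup]
    exact map_mono (le_zpowers_sup_of_relIndex_prime hle h ht1 ht2)
  rw [twoStepCentralizer, index_comap_of_surjective _ (mk'_surjective _),
    centralizer_eq_centralizer_singleton (mem_map_of_mem π ht1) hcyclic hcentral]
  refine (index_centralizer_singleton_dvd_card hcentral fun q => ?_).trans
    (by rw [← relIndex_ker, ker_mk'])
  induction q using QuotientGroup.induction_on with | H g =>
  have hgt : ⁅g, t⁆ ∈ γ 2 := by
    rw [lowerCentralSeries_succ, commutator_comm]
    exact commutator_mem_commutator (mem_top g) ht1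
  exact ⟨_, hgt, map_commutatorElement π g t⟩

end Subgroup

/-- For a finite `p`-group `G` of maximal class (coclass `1`) and order `p^n`, `n ≥ 4`,
the two-step centralizer `χ₂(G) = {g ∈ G : [g,h] ∈ γ₄(G) for all h ∈ γ₂(G)}` is a
maximal subgroup of `G`.  Here `γ_i(G) = lowerCentralSeries G (i-1)` and
`[g,h] = g⁻¹h⁻¹gh`. -/
theorem two_step_centralizer_is_maximal (p : ℕ) (hp : p.Prime)
    (G : Type*) [Group G] [Finite G] [Group.IsNilpotent G]
    (n : ℕ) (hn : 4 ≤ n) (hcard : Nat.card G = p ^ n)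
    (hclass : Group.nilpotencyClass G = n - 1) :
    ∃ χ : Subgroup G,
      (∀ g : G, g ∈ χ ↔
        ∀ h ∈ Subgroup.lowerCentralSeries (⊤ : Subgroup G) 1,
          g⁻¹ * h⁻¹ * g * h ∈ Subgroup.lowerCentralSeries (⊤ : Subgroup G) 3) ∧
      IsCoatom χ := by
  have : Fact p.Prime := ⟨hp⟩
  have hcard' : Nat.card G = p ^ (Group.nilpotencyClass G + 1) := by
    rw [hclass, hcard, Nat.sub_add_cancel (by omega)]
  have h21 := Subgroup.relIndex_lowerCentralSeries_of_card_eq hcard' le_rfl (by omega)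
  have h32 := Subgroup.relIndex_lowerCentralSeries_of_card_eq hcard' one_le_two (by omega)
  refine ⟨Subgroup.twoStepCentralizer G, fun _ => Subgroup.mem_twoStepCentralizer,
    Subgroup.isCoatom_of_index_prime ?_⟩
  have hdvd := Subgroup.index_twoStepCentralizer_dvd (h21 ▸ hp)
  rw [h32] at hdvd
  obtain h1 | hindex := (Nat.dvd_prime hp).mp hdvd
  · rw [Subgroup.index_eq_one, Subgroup.twoStepCentralizer_eq_top_iff] at h1
    exact absurd h1 (Subgroup.lowerCentralSeries_succ_lt (k := 2) (by omega)).not_ge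
  · exact hindex ▸ hp
end
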